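/- Let T be a Tambara functor on a finite group G. For any family {𝔦_λ} of ideals of T, the levelwise sum (Σ_λ 𝔦_λ)(X) = Σ_λ 𝔦_λ(X) is an ideal of T; in particular, for ideals 𝔦, 𝔧 and a G-map f : X → Y, f_•(𝔦(X) + 𝔧(X)) ⊆ f_•(0) + 𝔦(Y) + 𝔧(Y). -/

import Mathlib

set_option autoImplicit false

/-! Finite G-sets -/

structure GSet (G : Type) [Group G] : Type 1 where
  carrier : Type
  [mulAction : MulAction G carrier]
  [finite : Finite carrier]

attribute [instance] GSet.mulAction GSet.finite

/-- Equivariant maps of finite `G`-sets. -/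
structure GSetHom {G : Type} [Group G] (X Y : GSet G) : Type where
  toFun : X.carrier → Y.carrier
  map_smul : ∀ (g : G) (x : X.carrier), toFun (g • x) = g • toFun x

namespace GSetHom

variable {G : Type} [Group G]

def id (X : GSet G) : GSetHom X X := ⟨fun x => x, fun _ _ => rfl⟩

def comp {X Y Z : GSet G} (g : GSetHom Y Z) (f : GSetHom X Y) : GSetHom X Z :=
  ⟨fun x => g.toFun (f.toFun x), fun a x => by
    show g.toFun (f.toFun (a • x)) = a • g.toFun (f.toFun x)
    rw [f.map_smul, g.map_smul]⟩

end GSetHom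

namespace GSet

variable {G : Type} [Group G]

/-- Binary disjoint union of `G`-sets. -/
def sum (X Y : GSet G) : GSet G where
  carrier := X.carrier ⊕ Y.carrier

def inl (X Y : GSet G) : GSetHom X (X.sum Y) := ⟨Sum.inl, fun _ _ => rfl⟩

def inr (X Y : GSet G) : GSetHom Y (X.sum Y) := ⟨Sum.inr, fun _ _ => rfl⟩

instance : MulAction G Empty where
  smul _ x := x.elim
  one_smul x := x.elim
  mul_smul _ _ x := x.elim

/-- The empty `G`-set. -/
def empty (G : Type) [Group G] : GSet G where
  carrier := Empty

/-- Finite disjoint unions of `G`-sets. -/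
def sigma {n : ℕ} (Xs : Fin n → GSet G) : GSet G where
  carrier := Σ i, (Xs i).carrier

def sigmaIncl {n : ℕ} (Xs : Fin n → GSet G) (i : Fin n) : GSetHom (Xs i) (sigma Xs) :=
  ⟨fun x => ⟨i, x⟩, fun _ _ => rfl⟩

/-- The canonical pullback of two `G`-maps. -/
def pullback {X Y Z : GSet G} (f : GSetHom X Z) (g : GSetHom Y Z) : GSet G where
  carrier := { q : X.carrier × Y.carrier // f.toFun q.1 = g.toFun q.2 }
  mulAction :=
  { smul := fun a q => ⟨a • q.val, by
      show f.toFun (a • q.val.1) = g.toFun (a • q.val.2)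
      rw [f.map_smul, g.map_smul, q.property]⟩
    one_smul := fun q => Subtype.ext (one_smul G q.val)
    mul_smul := fun a b q => Subtype.ext (mul_smul a b q.val) }

def pbFst {X Y Z : GSet G} (f : GSetHom X Z) (g : GSetHom Y Z) :
    GSetHom (pullback f g) X := ⟨fun q => q.val.1, fun _ _ => rfl⟩

def pbSnd {X Y Z : GSet G} (f : GSetHom X Z) (g : GSetHom Y Z) :
    GSetHom (pullback f g) Y := ⟨fun q => q.val.2, fun _ _ => rfl⟩

/-- The complement of the image of a `G`-map, as a `G`-set. -/
def compl {X Y : GSet G} (f : GSetHom X Y) : GSet G where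
  carrier := { y : Y.carrier // ∀ x, f.toFun x ≠ y }
  mulAction :=
  { smul := fun g y => ⟨g • y.val, fun x h => y.property (g⁻¹ • x) (by
      rw [f.map_smul, h, inv_smul_smul])⟩
    one_smul := fun y => Subtype.ext (one_smul G y.val)
    mul_smul := fun a b y => Subtype.ext (mul_smul a b y.val) }

def complIncl {X Y : GSet G} (f : GSetHom X Y) : GSetHom (compl f) Y :=
  ⟨fun y => y.val, fun _ _ => rfl⟩

/-- Points of Tambara's dependent product `Π_f(A)`: pairs `(y, σ)` of a point `y : Y`
and a section `σ` of `p` on the fiber `f⁻¹(y)` (encoded as an `Option`-valued function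
supported exactly on the fiber). -/
def PiProp {X Y A : GSet G} (f : GSetHom X Y) (p : GSetHom A X)
    (s : Y.carrier × (X.carrier → Option A.carrier)) : Prop :=
  (∀ x, (s.2 x).isSome = true ↔ f.toFun x = s.1) ∧
  (∀ x a, s.2 x = some a → p.toFun a = x)

def PiCar {X Y A : GSet G} (f : GSetHom X Y) (p : GSetHom A X) : Type :=
  { s : Y.carrier × (X.carrier → Option A.carrier) // PiProp f p s }

instance optionFinite {α : Type} [Finite α] : Finite (Option α) :=
  Finite.of_equiv _ (Equiv.optionEquivSumPUnit.{0,0} α).symm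

instance piFinite {X Y A : GSet G} (f : GSetHom X Y) (p : GSetHom A X) :
    Finite (PiCar f p) := by
  unfold PiCar; infer_instance

def piSmul {X Y A : GSet G} (f : GSetHom X Y) (p : GSetHom A X) (g : G)
    (s : PiCar f p) : PiCar f p :=
  ⟨(g • s.val.1, fun x => (s.val.2 (g⁻¹ • x)).map (g • ·)), by
    constructor
    · intro x
      rw [Option.isSome_map, s.property.1 (g⁻¹ • x), f.map_smul]
      constructor
      · intro h; rw [← h, smul_inv_smul]
      · intro h; rw [h, inv_smul_smul]
    · intro x a ha
      rcases Option.map_eq_some_iff.mp ha with ⟨b, hb, rfl⟩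
      rw [p.map_smul, s.property.2 _ _ hb, smul_inv_smul]⟩

instance piAction {X Y A : GSet G} (f : GSetHom X Y) (p : GSetHom A X) :
    MulAction G (PiCar f p) where
  smul := piSmul f p
  one_smul s := by
    apply Subtype.ext
    refine Prod.ext (one_smul G s.val.1) ?_
    funext x
    show (s.val.2 ((1:G)⁻¹ • x)).map ((1:G) • ·) = s.val.2 x
    rw [inv_one, one_smul]
    cases h : s.val.2 x <;> simp [one_smul]
  mul_smul a b s := by
    apply Subtype.ext
    refine Prod.ext (mul_smul a b s.val.1) ?_
    funext x
    show (s.val.2 ((a * b)⁻¹ • x)).map ((a * b) • ·)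
        = ((s.val.2 (b⁻¹ • (a⁻¹ • x))).map (b • ·)).map (a • ·)
    rw [Option.map_map, mul_inv_rev, mul_smul]
    cases h : s.val.2 (b⁻¹ • a⁻¹ • x) <;> simp [mul_smul, Function.comp]

/-- Tambara's dependent product `Π_f(A)` as a `G`-set. -/
def piObj {X Y A : GSet G} (f : GSetHom X Y) (p : GSetHom A X) : GSet G where
  carrier := PiCar f p

/-- The projection `π : Π_f(A) → Y`. -/
def piPr {X Y A : GSet G} (f : GSetHom X Y) (p : GSetHom A X) :
    GSetHom (piObj f p) Y := ⟨fun s => s.val.1, fun _ _ => rfl⟩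

theorem optGet {α : Type} {o : Option α} {a : α} (h : o = some a) :
    ∀ hs : o.isSome = true, o.get hs = a := by subst h; intro _; rfl

/-- The evaluation map `λ : X ×_Y Π_f(A) → A`, `(x, (y, σ)) ↦ σ(x)`. -/
def piEval {X Y A : GSet G} (f : GSetHom X Y) (p : GSetHom A X) :
    GSetHom (pullback f (piPr f p)) A where
  toFun z := (z.val.2.val.2 z.val.1).get (by
    rw [z.val.2.property.1 z.val.1]; exact z.property)
  map_smul g z := by
    have hs : (z.val.2.val.2 z.val.1).isSome = true := by
      rw [z.val.2.property.1 z.val.1]; exact z.property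
    obtain ⟨a, ha⟩ := Option.isSome_iff_exists.mp hs
    have h1 : z.val.2.val.2 z.val.1 = some a := ha
    have h2 : (g • z).val.2.val.2 (g • z).val.1 = some (g • a) := by
      show (z.val.2.val.2 (g⁻¹ • (g • z.val.1))).map (g • ·) = some (g • a)
      rw [inv_smul_smul, h1]; rfl
    simp only [optGet h2, optGet h1]

end GSet

namespace GSet

/-- A transitive (nonempty) finite `G`-set. -/
def IsTransitive {G : Type} [Group G] (X : GSet G) : Prop :=
  Nonempty X.carrier ∧ MulAction.IsPretransitive G X.carrier

end GSet

/-! Tambara functors -/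

/-- The underlying system of commutative rings of a Tambara functor. -/
structure TamData (G : Type) [Group G] : Type 1 where
  obj : GSet G → Type
  ring : ∀ X, CommRing (obj X)

attribute [instance] TamData.ring

/-- A Tambara functor on the finite group `G`: a system of commutative rings `obj X`
indexed by finite `G`-sets, together with restrictions `res`, additive transfers `tr`
and multiplicative transfers `nm`, functorial, additive, satisfying the Mackey
base-change conditions, the projection formula, and Tambara's distributive law. -/
structure TambaraFunctor (G : Type) [Group G] extends TamData G where
  res : ∀ {X Y : GSet G}, GSetHom X Y → (obj Y →+* obj X)
  tr : ∀ {X Y : GSet G}, GSetHom X Y → (obj X →+ obj Y)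
  nm : ∀ {X Y : GSet G}, GSetHom X Y → (obj X →* obj Y)
  res_id : ∀ {X : GSet G} (x : obj X), res (GSetHom.id X) x = x
  res_comp : ∀ {X Y Z : GSet G} (f : GSetHom X Y) (g : GSetHom Y Z) (z : obj Z),
    res f (res g z) = res (g.comp f) z
  tr_id : ∀ {X : GSet G} (x : obj X), tr (GSetHom.id X) x = x
  tr_comp : ∀ {X Y Z : GSet G} (f : GSetHom X Y) (g : GSetHom Y Z) (x : obj X),
    tr g (tr f x) = tr (g.comp f) x
  nm_id : ∀ {X : GSet G} (x : obj X), nm (GSetHom.id X) x = x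
  nm_comp : ∀ {X Y Z : GSet G} (f : GSetHom X Y) (g : GSetHom Y Z) (x : obj X),
    nm g (nm f x) = nm (g.comp f) x
  /-- additivity on binary disjoint unions -/
  add_bij : ∀ X Y : GSet G, Function.Bijective
    (fun t : obj (X.sum Y) => (res (GSet.inl X Y) t, res (GSet.inr X Y) t))
  /-- `T(∅)` is the zero ring -/
  empty_subsingleton : ∀ x y : obj (GSet.empty G), x = y
  /-- Mackey base change for the additive transfer -/
  tr_bc : ∀ {X Y Z : GSet G} (f : GSetHom X Z) (g : GSetHom Y Z) (x : obj X),
    res g (tr f x) = tr (GSet.pbSnd f g) (res (GSet.pbFst f g) x)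
  /-- Mackey base change for the multiplicative transfer -/
  nm_bc : ∀ {X Y Z : GSet G} (f : GSetHom X Z) (g : GSetHom Y Z) (x : obj X),
    res g (nm f x) = nm (GSet.pbSnd f g) (res (GSet.pbFst f g) x)
  /-- the projection formula -/
  proj_formula : ∀ {X Y : GSet G} (f : GSetHom X Y) (a : obj X) (b : obj Y),
    tr f (a * res f b) = tr f a * b
  /-- the norm of zero is the additive transfer of `1` from the complement of the image -/
  nm_zero : ∀ {X Y : GSet G} (f : GSetHom X Y), nm f (0 : obj X) = tr (GSet.complIncl f) 1
  /-- Tambara's distributive law, via the canonical exponential diagram on `Π_f(A)` -/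
  distrib : ∀ {X Y A : GSet G} (f : GSetHom X Y) (p : GSetHom A X) (a : obj A),
    nm f (tr p a) = tr (GSet.piPr f p)
      (nm (GSet.pbSnd f (GSet.piPr f p)) (res (GSet.piEval f p) a))

namespace TambaraFunctor

variable {G : Type} [Group G]

/-- `f_!(x) = f_•(x) - f_•(0)`. -/
def shriek (T : TambaraFunctor G) {X Y : GSet G} (f : GSetHom X Y) (x : T.obj X) :
    T.obj Y := T.nm f x - T.nm f 0

end TambaraFunctor

/-- A morphism of Tambara functors: a family of ring homomorphisms natural with respect
to restrictions, additive transfers and multiplicative transfers. -/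
structure TamHom {G : Type} [Group G] (T S : TambaraFunctor G) where
  app : ∀ X : GSet G, T.obj X →+* S.obj X
  app_res : ∀ {X Y : GSet G} (f : GSetHom X Y) (y : T.obj Y),
    app X (T.res f y) = S.res f (app Y y)
  app_tr : ∀ {X Y : GSet G} (f : GSetHom X Y) (x : T.obj X),
    app Y (T.tr f x) = S.tr f (app X x)
  app_nm : ∀ {X Y : GSet G} (f : GSetHom X Y) (x : T.obj X),
    app Y (T.nm f x) = S.nm f (app X x)

namespace TambaraFunctor

variable {G : Type} [Group G]

/-- An ideal of a Tambara functor: a family of ideals closed under restrictions,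
additive transfers, and satisfying `f_•(𝔦(X)) ⊆ f_•(0) + 𝔦(Y)`
(equivalently, closed under `f_!`). -/
structure IsIdeal (T : TambaraFunctor G) (I : ∀ X : GSet G, Ideal (T.obj X)) : Prop where
  res_mem : ∀ {X Y : GSet G} (f : GSetHom X Y) {y : T.obj Y}, y ∈ I Y → T.res f y ∈ I X
  tr_mem : ∀ {X Y : GSet G} (f : GSetHom X Y) {x : T.obj X}, x ∈ I X → T.tr f x ∈ I Y
  shriek_mem : ∀ {X Y : GSet G} (f : GSetHom X Y) {x : T.obj X},
    x ∈ I X → T.shriek f x ∈ I Y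

/-- The ideal generated by a family of subsets: the intersection of all ideals
containing it. -/
def gen (T : TambaraFunctor G) (S : ∀ X : GSet G, Set (T.obj X)) (X : GSet G) :
    Ideal (T.obj X) :=
  ⨅ (I : ∀ Y : GSet G, Ideal (T.obj Y)) (_ : T.IsIdeal I) (_ : ∀ Y, S Y ⊆ ↑(I Y)), I X

/-- The family of subsets consisting of the single element `a ∈ T(A)`. -/
def single (T : TambaraFunctor G) (A : GSet G) (a : T.obj A) (X : GSet G) :
    Set (T.obj X) := { x | ∃ h : A = X, h ▸ a = x }

/-- The principal ideal `⟨a⟩` generated by `a ∈ T(A)`. -/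
def principal (T : TambaraFunctor G) (A : GSet G) (a : T.obj A) :
    ∀ X : GSet G, Ideal (T.obj X) := T.gen (T.single A a)

/-- The defining set of the product of two ideals. -/
def mulSet (T : TambaraFunctor G) (I J : ∀ X : GSet G, Ideal (T.obj X)) (X : GSet G) :
    Set (T.obj X) :=
  { x | ∃ (A : GSet G) (p : GSetHom A X) (a b : T.obj A),
      a ∈ I A ∧ b ∈ J A ∧ x = T.tr p (a * b) }

/-- The product of two ideals of a Tambara functor. -/
def mulIdl (T : TambaraFunctor G) (I J : ∀ X : GSet G, Ideal (T.obj X)) (X : GSet G) :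
    Ideal (T.obj X) := Ideal.span (T.mulSet I J X)

/-- Iterated products of ideals. -/
def mulMulti (T : TambaraFunctor G) :
    List (∀ X : GSet G, Ideal (T.obj X)) → ∀ X : GSet G, Ideal (T.obj X)
  | [] => fun _ => ⊤
  | I :: ls => T.mulIdl I (T.mulMulti ls)

/-- A prime ideal of a Tambara functor. -/
structure IsPrime (T : TambaraFunctor G) (P : ∀ X : GSet G, Ideal (T.obj X)) : Prop where
  isIdeal : T.IsIdeal P
  ne_top : ∃ X : GSet G, P X ≠ ⊤
  mem_or_mem : ∀ {X Y : GSet G}, X.IsTransitive → Y.IsTransitive →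
    ∀ {a : T.obj X} {b : T.obj Y},
      (∀ Z : GSet G, T.mulIdl (T.principal X a) (T.principal Y b) Z ≤ P Z) →
      a ∈ P X ∨ b ∈ P Y

/-- A maximal ideal of a Tambara functor. -/
structure IsMaximal (T : TambaraFunctor G) (M : ∀ X : GSet G, Ideal (T.obj X)) : Prop where
  isIdeal : T.IsIdeal M
  ne_top : ∃ X : GSet G, M X ≠ ⊤
  eq_of_le : ∀ K : ∀ X : GSet G, Ideal (T.obj X), T.IsIdeal K →
    (∀ X, M X ≤ K X) → (K = M ∨ ∀ X, K X = ⊤)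

end TambaraFunctor

namespace GSet

/-- The `G`-set `G/e`, i.e. `G` with the left regular action. -/
def regular (G : Type) [Group G] [Finite G] : GSet G where
  carrier := G

/-- Right multiplication `G/e → G/e`, an equivariant map. -/
def rightMul {G : Type} [Group G] [Finite G] (g : G) :
    GSetHom (regular G) (regular G) :=
  ⟨fun x => (id x : G) * g, fun a x => mul_assoc a x g⟩

end GSet


/-! Write `u + v = ∇_+(u, v)` with the fold map `∇ : X ⊔ X → X`. The distributive law expresses
`f_•(∇_+ c)` as a transfer from the exponential object `Π_f(X ⊔ X)`. Split it into the sections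
with all values in the right summand, over which the norm only sees the right component of `c`,
and the remaining sections, over which the norm has a factor that is the norm along a surjection
of an element restricted from the left summand; since `g_•(0) = 0` for surjective `g`, ideals are
closed under such norms. Hence `f_•(u + v) ≡ f_•(v)` modulo any ideal containing `u`, and this
congruence is additive in `u`, so it passes to sums of ideals. -/

namespace GSetHom

variable {G : Type} [Group G]

theorem ext {X Y : GSet G} {f g : GSetHom X Y} (h : ∀ x, f.toFun x = g.toFun x) : f = g := by
  cases f; cases g; congr 1; exact funext h

def comap {V W : GSet G} (h : GSetHom V W) (S : SubMulAction G W.carrier) :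
    SubMulAction G V.carrier where
  carrier := h.toFun ⁻¹' S
  smul_mem' g v hv := by
    simp only [Set.mem_preimage, SetLike.mem_coe, h.map_smul] at hv ⊢
    exact S.smul_mem g hv

noncomputable def inverse {V W : GSet G} (h : GSetHom V W) (hh : Function.Bijective h.toFun) :
    GSetHom W V where
  toFun := (Equiv.ofBijective _ hh).symm
  map_smul g w := hh.1 <| by
    simp only [Equiv.ofBijective_apply_symm_apply, h.map_smul]

theorem comp_inverse {V W : GSet G} (h : GSetHom V W) (hh : Function.Bijective h.toFun) :
    h.comp (h.inverse hh) = GSetHom.id W :=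
  ext fun w => (Equiv.ofBijective _ hh).apply_symm_apply w

end GSetHom

namespace GSet

variable {G : Type} [Group G]

abbrev sub (W : GSet G) (S : SubMulAction G W.carrier) : GSet G where
  carrier := S

def subIncl {W : GSet G} (S : SubMulAction G W.carrier) : GSetHom (W.sub S) W :=
  ⟨Subtype.val, fun _ _ => rfl⟩

theorem subIncl_injective {W : GSet G} (S : SubMulAction G W.carrier) :
    Function.Injective (subIncl S).toFun :=
  Subtype.val_injective

theorem subIncl_ne_subIncl_compl {W : GSet G} (S : SubMulAction G W.carrier)
    (a : (W.sub S).carrier) (b : (W.sub Sᶜ).carrier) :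
    (subIncl S).toFun a ≠ (subIncl Sᶜ).toFun b :=
  fun h => b.property (by have e : a.val = b.val := h; exact e ▸ a.property)

def _root_.GSetHom.codRestrict {V W : GSet G} (h : GSetHom V W) (S : SubMulAction G W.carrier)
    (hS : ∀ v, h.toFun v ∈ S) : GSetHom V (W.sub S) :=
  ⟨fun v => ⟨h.toFun v, hS v⟩, fun g v => Subtype.ext (h.map_smul g v)⟩

theorem subIncl_comp_codRestrict {V W : GSet G} (h : GSetHom V W) (S : SubMulAction G W.carrier)
    (hS : ∀ v, h.toFun v ∈ S) : (subIncl S).comp (h.codRestrict S hS) = h :=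
  rfl

def sumSubCompl {W : GSet G} (S : SubMulAction G W.carrier) :
    GSetHom ((W.sub S).sum (W.sub Sᶜ)) W :=
  ⟨Sum.elim Subtype.val Subtype.val, by rintro g (w | w) <;> rfl⟩

theorem sumSubCompl_bijective {W : GSet G} (S : SubMulAction G W.carrier) :
    Function.Bijective (sumSubCompl S).toFun := by
  refine ⟨?_, fun w => ?_⟩
  · rintro (a | a) (b | b) h
    · exact congrArg Sum.inl (Subtype.ext h)
    · exact absurd h (subIncl_ne_subIncl_compl S a b)
    · exact absurd h.symm (subIncl_ne_subIncl_compl S b a)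
    · exact congrArg Sum.inr (Subtype.ext h)
  · by_cases hw : w ∈ S
    · exact ⟨Sum.inl ⟨w, hw⟩, rfl⟩
    · exact ⟨Sum.inr ⟨w, hw⟩, rfl⟩

def prod (X Y : GSet G) : GSet G where
  carrier := X.carrier × Y.carrier

def prodFst (X Y : GSet G) : GSetHom (X.prod Y) X := ⟨Prod.fst, fun _ _ => rfl⟩

def prodSnd (X Y : GSet G) : GSetHom (X.prod Y) Y := ⟨Prod.snd, fun _ _ => rfl⟩

def pullbackSub {X Y Z : GSet G} (f : GSetHom X Z) (g : GSetHom Y Z) :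
    SubMulAction G (X.prod Y).carrier where
  carrier := {q | f.toFun q.1 = g.toFun q.2}
  smul_mem' a q (hq : f.toFun q.1 = g.toFun q.2) := by
    show f.toFun (a • q.1) = g.toFun (a • q.2)
    rw [f.map_smul, g.map_smul, hq]

theorem pullback_span_eq {X Y Z : GSet G} (f : GSetHom X Z) (g : GSetHom Y Z) {R : Sort*}
    (F : ∀ P : GSet G, GSetHom P X → GSetHom P Y → R) :
    F _ (pbFst f g) (pbSnd f g) =
      F _ ((prodFst X Y).comp (subIncl (pullbackSub f g)))
        ((prodSnd X Y).comp (subIncl (pullbackSub f g))) :=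
  rfl

theorem pullback_span_congr {X Y Z₁ Z₂ : GSet G} {f₁ : GSetHom X Z₁} {g₁ : GSetHom Y Z₁}
    {f₂ : GSetHom X Z₂} {g₂ : GSetHom Y Z₂}
    (h : ∀ a b, f₁.toFun a = g₁.toFun b ↔ f₂.toFun a = g₂.toFun b) {R : Sort*}
    (F : ∀ P : GSet G, GSetHom P X → GSetHom P Y → R) :
    F _ (pbFst f₁ g₁) (pbSnd f₁ g₁) = F _ (pbFst f₂ g₂) (pbSnd f₂ g₂) := by
  have hsub : pullbackSub f₁ g₁ = pullbackSub f₂ g₂ := SubMulAction.ext fun q => h q.1 q.2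
  rw [pullback_span_eq f₁ g₁ F, pullback_span_eq f₂ g₂ F, hsub]

def fold (X : GSet G) : GSetHom (X.sum X) X :=
  ⟨Sum.elim _root_.id _root_.id, by rintro g (x | x) <;> rfl⟩

theorem fold_comp_inl (X : GSet G) : (fold X).comp (inl X X) = GSetHom.id X := rfl

theorem fold_comp_inr (X : GSet G) : (fold X).comp (inr X X) = GSetHom.id X := rfl

def sumLeft (X Y : GSet G) : SubMulAction G (X.sum Y).carrier where
  carrier := {s | s.isLeft}
  smul_mem' g s := by cases s <;> exact id

def piValuesIn {X Y A : GSet G} (f : GSetHom X Y) (p : GSetHom A X)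
    (S : SubMulAction G A.carrier) : SubMulAction G (piObj f p).carrier where
  carrier := {σ | ∀ x a, σ.val.2 x = some a → a ∈ S}
  smul_mem' g σ hσ x a ha := by
    obtain ⟨b, hb, rfl⟩ := Option.map_eq_some_iff.mp ha
    exact S.smul_mem g (hσ _ _ hb)

theorem piEval_mem_of_mem_piValuesIn {X Y A : GSet G} {f : GSetHom X Y} {p : GSetHom A X}
    {S : SubMulAction G A.carrier} (z : (pullback f (piPr f p)).carrier)
    (hz : z.val.2 ∈ piValuesIn f p S) : (piEval f p).toFun z ∈ S :=
  hz _ _ (Option.some_get _).symm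

theorem exists_piEval_mem_of_mem_compl_piValuesIn_compl {X Y A : GSet G} {f : GSetHom X Y}
    {p : GSetHom A X} {S : SubMulAction G A.carrier} {σ : (piObj f p).carrier}
    (hσ : σ ∈ (piValuesIn f p Sᶜ)ᶜ) :
    ∃ z : (pullback f (piPr f p)).carrier,
      (pbSnd f (piPr f p)).toFun z = σ ∧ (piEval f p).toFun z ∈ S := by
  obtain ⟨x, a, hxa, ha⟩ : ∃ x a, σ.val.2 x = some a ∧ a ∈ S := by
    by_contra! h
    exact hσ fun x a hxa => h x a hxa
  have hfx : f.toFun x = σ.val.1 := (σ.property.1 x).mp (by rw [hxa]; rfl)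
  refine ⟨⟨(x, σ), hfx⟩, rfl, ?_⟩
  show (σ.val.2 x).get _ ∈ S
  rwa [optGet hxa]

end GSet

theorem Ideal.apply_mem_iSup {ι : Sort*} {R S : Type*} [Semiring R] [Semiring S]
    {I : ι → Ideal R} {J : ι → Ideal S} (φ : R →+ S) (h : ∀ l, ∀ x ∈ I l, φ x ∈ J l) {x : R}
    (hx : x ∈ ⨆ l, I l) : φ x ∈ ⨆ l, J l :=
  Submodule.iSup_induction I (motive := fun x => φ x ∈ ⨆ l, J l) hx
    (fun l x hx => Ideal.mem_iSup_of_mem l (h l x hx)) (by simp)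
    fun a b ha hb => by rw [map_add]; exact add_mem ha hb

namespace TambaraFunctor

variable {G : Type} [Group G] (T : TambaraFunctor G)

open GSet

theorem subsingleton_obj_of_isEmpty {W : GSet G} (hW : IsEmpty W.carrier) :
    Subsingleton (T.obj W) := by
  let e₁ : GSetHom (GSet.empty G) W := ⟨fun e => e.elim, fun _ e => e.elim⟩
  let e₂ : GSetHom W (GSet.empty G) := ⟨fun w => hW.elim w, fun _ w => hW.elim w⟩
  have hid : e₁.comp e₂ = GSetHom.id W := GSetHom.ext fun w => hW.elim w
  refine ⟨fun a b => ?_⟩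
  rw [← T.res_id a, ← T.res_id b, ← hid, ← T.res_comp, ← T.res_comp,
    T.empty_subsingleton (T.res e₁ a)]

theorem tr_of_isEmpty {W Z : GSet G} (hW : IsEmpty W.carrier) (f : GSetHom W Z) (a : T.obj W) :
    T.tr f a = 0 := by
  rw [(T.subsingleton_obj_of_isEmpty hW).elim a 0, map_zero]

theorem nm_of_isEmpty {W Z : GSet G} (hW : IsEmpty W.carrier) (f : GSetHom W Z) (a : T.obj W) :
    T.nm f a = 1 := by
  rw [(T.subsingleton_obj_of_isEmpty hW).elim a 1, map_one]

theorem res_injective_of_bijective {V W : GSet G} (h : GSetHom V W)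
    (hh : Function.Bijective h.toFun) : Function.Injective (T.res h) := fun a b hab => by
  rw [← T.res_id a, ← T.res_id b, ← h.comp_inverse hh, ← T.res_comp, ← T.res_comp, hab]

/-- For injective `f` the pullback of `f` along itself is the diagonal. -/
theorem res_tr_of_injective {A B : GSet G} (f : GSetHom A B) (hf : Function.Injective f.toFun)
    (x : T.obj A) : T.res f (T.tr f x) = x := by
  rw [T.tr_bc, pullback_span_congr (f₂ := GSetHom.id A) (g₂ := GSetHom.id A)
      (fun a b => ⟨fun e => hf e, congrArg f.toFun⟩) fun _ p q => T.tr q (T.res p x),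
    ← T.tr_bc, T.res_id, T.tr_id]

theorem res_nm_of_injective {A B : GSet G} (f : GSetHom A B) (hf : Function.Injective f.toFun)
    (x : T.obj A) : T.res f (T.nm f x) = x := by
  rw [T.nm_bc, pullback_span_congr (f₂ := GSetHom.id A) (g₂ := GSetHom.id A)
      (fun a b => ⟨fun e => hf e, congrArg f.toFun⟩) fun _ p q => T.nm q (T.res p x),
    ← T.nm_bc, T.res_id, T.nm_id]

theorem res_tr_of_disjoint {A B W : GSet G} (f : GSetHom A W) (g : GSetHom B W)
    (hfg : ∀ a b, f.toFun a ≠ g.toFun b) (x : T.obj A) : T.res g (T.tr f x) = 0 := by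
  rw [T.tr_bc]
  exact T.tr_of_isEmpty (W := pullback f g) ⟨fun q => hfg _ _ q.property⟩ _ _

theorem res_nm_of_disjoint {A B W : GSet G} (f : GSetHom A W) (g : GSetHom B W)
    (hfg : ∀ a b, f.toFun a ≠ g.toFun b) (x : T.obj A) : T.res g (T.nm f x) = 1 := by
  rw [T.nm_bc]
  exact T.nm_of_isEmpty (W := pullback f g) ⟨fun q => hfg _ _ q.property⟩ _ _

theorem nm_zero_of_surjective {A B : GSet G} (f : GSetHom A B)
    (hf : Function.Surjective f.toFun) : T.nm f 0 = 0 := by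
  rw [T.nm_zero]
  refine T.tr_of_isEmpty ⟨fun y => ?_⟩ _ _
  obtain ⟨x, hx⟩ := hf y.val
  exact y.property x hx

section Decomposition

variable {W : GSet G} (S : SubMulAction G W.carrier)

theorem eq_of_res_subIncl_eq {ξ η : T.obj W}
    (h : T.res (subIncl S) ξ = T.res (subIncl S) η)
    (hc : T.res (subIncl Sᶜ) ξ = T.res (subIncl Sᶜ) η) : ξ = η := by
  apply T.res_injective_of_bijective _ (sumSubCompl_bijective S)
  apply (T.add_bij _ _).injective
  simp only [T.res_comp]
  exact Prod.ext h hc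

theorem tr_res_subIncl_add_tr_res_subIncl_compl (w : T.obj W) :
    T.tr (subIncl S) (T.res (subIncl S) w) + T.tr (subIncl Sᶜ) (T.res (subIncl Sᶜ) w) = w := by
  apply T.eq_of_res_subIncl_eq S
  · rw [map_add, T.res_tr_of_injective _ (subIncl_injective S),
      T.res_tr_of_disjoint _ _ fun a b h => subIncl_ne_subIncl_compl S b a h.symm, add_zero]
  · rw [map_add, T.res_tr_of_injective _ (subIncl_injective Sᶜ),
      T.res_tr_of_disjoint _ _ (subIncl_ne_subIncl_compl S), zero_add]

theorem nm_eq_nm_subIncl_mul_nm_subIncl_compl {Z : GSet G} (g : GSetHom W Z) (w : T.obj W) :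
    T.nm g w = T.nm (g.comp (subIncl S)) (T.res (subIncl S) w) *
      T.nm (g.comp (subIncl Sᶜ)) (T.res (subIncl Sᶜ) w) := by
  have hw : T.nm (subIncl S) (T.res (subIncl S) w) * T.nm (subIncl Sᶜ) (T.res (subIncl Sᶜ) w)
      = w := by
    apply T.eq_of_res_subIncl_eq S
    · rw [map_mul, T.res_nm_of_injective _ (subIncl_injective S),
        T.res_nm_of_disjoint _ _ fun a b h => subIncl_ne_subIncl_compl S b a h.symm, mul_one]
    · rw [map_mul, T.res_nm_of_injective _ (subIncl_injective Sᶜ),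
        T.res_nm_of_disjoint _ _ (subIncl_ne_subIncl_compl S), one_mul]
  conv_lhs => rw [← hw]
  rw [map_mul, T.nm_comp, T.nm_comp]

end Decomposition

theorem res_nm_res_piEval_congr {X Y A : GSet G} (f : GSetHom X Y) (p : GSetHom A X)
    (S : SubMulAction G A.carrier) {c c' : T.obj A}
    (h : T.res (subIncl S) c = T.res (subIncl S) c') :
    T.res (subIncl (piValuesIn f p S)) (T.nm (pbSnd f (piPr f p)) (T.res (piEval f p) c)) =
      T.res (subIncl (piValuesIn f p S))
        (T.nm (pbSnd f (piPr f p)) (T.res (piEval f p) c')) := by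
  set j := pbFst (pbSnd f (piPr f p)) (subIncl (piValuesIn f p S))
  have hj : ∀ v, ((piEval f p).comp j).toFun v ∈ S := fun v =>
    piEval_mem_of_mem_piValuesIn v.val.1 (by
      rw [show v.val.1.val.2 = v.val.2.val from v.property]; exact v.val.2.property)
  rw [T.nm_bc, T.nm_bc, T.res_comp, T.res_comp,
    ← subIncl_comp_codRestrict ((piEval f p).comp j) S hj, ← T.res_comp, ← T.res_comp, h]

section Ideal

variable {T} {K : ∀ X : GSet G, Ideal (T.obj X)} {X Y A : GSet G}

theorem IsIdeal.nm_mem_of_surjective (hK : T.IsIdeal K)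
    {A B : GSet G} {f : GSetHom A B} (hf : Function.Surjective f.toFun) {x : T.obj A}
    (hx : x ∈ K A) : T.nm f x ∈ K B := by
  simpa [shriek, T.nm_zero_of_surjective f hf] using hK.shriek_mem f hx

theorem IsIdeal.res_nm_res_piEval_mem (hK : T.IsIdeal K) (f : GSetHom X Y) (p : GSetHom A X)
    (S : SubMulAction G A.carrier) {c : T.obj A} (hc : T.res (subIncl S) c ∈ K (A.sub S)) :
    T.res (subIncl (piValuesIn f p Sᶜ)ᶜ)
        (T.nm (pbSnd f (piPr f p)) (T.res (piEval f p) c)) ∈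
      K ((piObj f p).sub (piValuesIn f p Sᶜ)ᶜ) := by
  set j := pbFst (pbSnd f (piPr f p)) (subIncl (piValuesIn f p Sᶜ)ᶜ)
  set q := pbSnd (pbSnd f (piPr f p)) (subIncl (piValuesIn f p Sᶜ)ᶜ)
  set L := ((piEval f p).comp j).comap S
  have hq : Function.Surjective (q.comp (subIncl L)).toFun := fun σ => by
    obtain ⟨z, hzσ, hzS⟩ := exists_piEval_mem_of_mem_compl_piValuesIn_compl σ.property
    exact ⟨⟨⟨(z, σ), hzσ⟩, hzS⟩, rfl⟩
  rw [T.nm_bc, T.res_comp, T.nm_eq_nm_subIncl_mul_nm_subIncl_compl L, T.res_comp,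
    ← subIncl_comp_codRestrict (((piEval f p).comp j).comp (subIncl L)) S fun v => v.property,
    ← T.res_comp]
  exact Ideal.mul_mem_right _ _ (hK.nm_mem_of_surjective hq (hK.res_mem _ hc))

theorem IsIdeal.nm_tr_sub_nm_tr_mem (hK : T.IsIdeal K) (f : GSetHom X Y) (p : GSetHom A X)
    (S : SubMulAction G A.carrier) {c c' : T.obj A}
    (hcompl : T.res (subIncl Sᶜ) c = T.res (subIncl Sᶜ) c')
    (hc : T.res (subIncl S) c ∈ K (A.sub S)) (hc' : T.res (subIncl S) c' ∈ K (A.sub S)) :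
    T.nm f (T.tr p c) - T.nm f (T.tr p c') ∈ K Y := by
  set V := piValuesIn f p Sᶜ
  have hsplit : ∀ z, T.tr (piPr f p) z =
      T.tr (piPr f p) (T.tr (subIncl V) (T.res (subIncl V) z)) +
        T.tr (piPr f p) (T.tr (subIncl Vᶜ) (T.res (subIncl Vᶜ) z)) := fun z => by
    rw [← map_add, T.tr_res_subIncl_add_tr_res_subIncl_compl]
  rw [T.distrib, T.distrib, hsplit (T.nm _ (T.res _ c)), hsplit (T.nm _ (T.res _ c')),
    T.res_nm_res_piEval_congr f p Sᶜ hcompl, add_sub_add_left_eq_sub]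
  exact sub_mem (hK.tr_mem _ (hK.tr_mem _ (hK.res_nm_res_piEval_mem f p S hc)))
    (hK.tr_mem _ (hK.tr_mem _ (hK.res_nm_res_piEval_mem f p S hc')))

theorem IsIdeal.nm_add_sub_nm_mem (hK : T.IsIdeal K) (f : GSetHom X Y)
    {u : T.obj X} (hu : u ∈ K X) (v : T.obj X) : T.nm f (u + v) - T.nm f v ∈ K Y := by
  have huv : T.tr (fold X) (T.tr (inl X X) u + T.tr (inr X X) v) = u + v := by
    rw [map_add, T.tr_comp, T.tr_comp, fold_comp_inl, fold_comp_inr, T.tr_id, T.tr_id]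
  have hv : T.tr (fold X) (T.tr (inr X X) v) = v := by
    rw [T.tr_comp, fold_comp_inr, T.tr_id]
  have hinl : ∀ a b, (inl X X).toFun a ≠ (subIncl (sumLeft X X)ᶜ).toFun b :=
    fun a b h => b.property (by rw [← show Sum.inl a = b.val from h]; rfl)
  have hinr : ∀ a b, (inr X X).toFun a ≠ (subIncl (sumLeft X X)).toFun b :=
    fun a b h => Bool.false_ne_true (show (Sum.inr a : (X.sum X).carrier).isLeft = true by
      rw [show Sum.inr a = b.val from h]; exact b.property)
  have key := hK.nm_tr_sub_nm_tr_mem f (fold X) (sumLeft X X)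
    (c := T.tr (inl X X) u + T.tr (inr X X) v) (c' := T.tr (inr X X) v)
    (by rw [map_add, T.res_tr_of_disjoint _ _ hinl, zero_add])
    (by rw [map_add, T.res_tr_of_disjoint _ _ hinr, add_zero, T.tr_bc]
        exact hK.tr_mem _ (hK.res_mem _ hu))
    (by rw [T.res_tr_of_disjoint _ _ hinr]; exact zero_mem _)
  rwa [huv, hv] at key

end Ideal

theorem isIdeal_iSup {ι : Sort*} {Is : ι → ∀ X : GSet G, Ideal (T.obj X)}
    (hIs : ∀ l, T.IsIdeal (Is l)) : T.IsIdeal fun X => ⨆ l, Is l X := by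
  refine ⟨fun f _ hy =>
      Ideal.apply_mem_iSup (T.res f).toAddMonoidHom (fun l _ => (hIs l).res_mem f) hy,
    fun f _ hx => Ideal.apply_mem_iSup (T.tr f) (fun l _ => (hIs l).tr_mem f) hx,
    fun f x hx => ?_⟩
  suffices ∀ v, T.nm f (x + v) - T.nm f v ∈ ⨆ l, Is l _ by simpa [shriek] using this 0
  refine Submodule.iSup_induction _ (motive := fun x => ∀ v, T.nm f (x + v) - T.nm f v ∈ _) hx
    (fun l u hu v => Ideal.mem_iSup_of_mem l ((hIs l).nm_add_sub_nm_mem f hu v)) (by simp)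
    fun a b ha hb v => ?_
  rw [add_assoc, ← sub_add_sub_cancel _ (T.nm f (b + v))]
  exact add_mem (ha _) (hb v)

end TambaraFunctor

theorem sum_isIdeal_general (G : Type) [Group G] (T : TambaraFunctor G) :
    (∀ (ι : Type) (Is : ι → ∀ X : GSet G, Ideal (T.obj X)),
      (∀ l : ι, T.IsIdeal (Is l)) → T.IsIdeal (fun X => ⨆ l : ι, Is l X)) ∧
    (∀ I J : ∀ X : GSet G, Ideal (T.obj X), T.IsIdeal I → T.IsIdeal J →
      ∀ {X Y : GSet G} (f : GSetHom X Y), ∀ x ∈ I X ⊔ J X,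
        ∃ i ∈ I Y, ∃ j ∈ J Y, T.nm f x = T.nm f 0 + i + j) := by
  refine ⟨fun ι Is hIs => T.isIdeal_iSup hIs, fun I J hI hJ X Y f x hx => ?_⟩
  obtain ⟨a, ha, b, hb, rfl⟩ := Submodule.mem_sup.mp hx
  refine ⟨_, hI.nm_add_sub_nm_mem f ha b, _, hJ.nm_add_sub_nm_mem f hb 0, ?_⟩
  rw [add_zero]
  ring

/-- the levelwise sum of any family of ideals of `T` is an ideal; in
particular `f_•(𝔦(X) + 𝔧(X)) ⊆ f_•(0) + 𝔦(Y) + 𝔧(Y)`. -/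
theorem sum_isIdeal (G : Type) [Group G] [Finite G] (T : TambaraFunctor G) :
    (∀ (ι : Type) (Is : ι → ∀ X : GSet G, Ideal (T.obj X)),
      (∀ l : ι, T.IsIdeal (Is l)) → T.IsIdeal (fun X => ⨆ l : ι, Is l X)) ∧
    (∀ I J : ∀ X : GSet G, Ideal (T.obj X), T.IsIdeal I → T.IsIdeal J →
      ∀ {X Y : GSet G} (f : GSetHom X Y), ∀ x ∈ I X ⊔ J X,
        ∃ i ∈ I Y, ∃ j ∈ J Y, T.nm f x = T.nm f 0 + i + j) :=
  sum_isIdeal_general G T
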